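/- arXiv:2007.08418 — 2 statements merged into one kernel-verified Lean document; each statement's English description precedes it below -/
import Mathlib

section
/- Let φ_n : Λ → ℂ be C¹ functions on a compact interval Λ with |φ_n(λ)| ≤ C(1+n)^{-1/4} and |φ_n′(λ)| ≤ C(1+n)^{1/4} for all λ ∈ Λ and n ∈ ℤ₊. Let r > 1/4 and let s satisfy 0 < s < 2r − 1/2 and s ≤ 1. Then there is a constant C' such that for all f ∈ ℓ²(ℤ₊) and all λ, μ ∈ Λ, |∑_{n=0}^∞ (φ_n(μ) − φ_n(λ))(1+n)^{-r} f_n| ≤ C' |μ − λ|^s ‖f‖_{ℓ²}. -/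
/-- Cauchy–Schwarz for tsums of nonnegative reals. -/
lemma cs_tsum (u v : ℕ → ℝ) (hu : ∀ n, 0 ≤ u n) (hv : ∀ n, 0 ≤ v n)
    (hu2 : Summable (fun n => u n ^ 2)) (hv2 : Summable (fun n => v n ^ 2)) :
    Summable (fun n => u n * v n) ∧
      ∑' n, u n * v n ≤ Real.sqrt (∑' n, u n ^ 2) * Real.sqrt (∑' n, v n ^ 2) := by
  have key : ∀ F : Finset ℕ, ∑ n ∈ F, u n * v n ≤
      Real.sqrt (∑' n, u n ^ 2) * Real.sqrt (∑' n, v n ^ 2) := by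
    intro F
    refine (Real.sum_mul_le_sqrt_mul_sqrt F u v).trans ?_
    refine mul_le_mul ?_ ?_ (Real.sqrt_nonneg _) (Real.sqrt_nonneg _)
    · exact Real.sqrt_le_sqrt (Summable.sum_le_tsum F (fun n _ => by positivity) hu2)
    · exact Real.sqrt_le_sqrt (Summable.sum_le_tsum F (fun n _ => by positivity) hv2)
  have hsum : Summable (fun n => u n * v n) :=
    summable_of_sum_le (fun n => mul_nonneg (hu n) (hv n)) key
  exact ⟨hsum, Summable.tsum_le_of_sum_le hsum key⟩

lemma interp (s : ℝ) (hs0 : 0 ≤ s) (hs2 : s ≤ 1) (d A B : ℝ) (hd : 0 ≤ d)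
    (hA : d ≤ A) (hB : d ≤ B) : d ≤ A ^ (1 - s) * B ^ s := by
  have hA0 : 0 ≤ A := hd.trans hA
  have hB0 : 0 ≤ B := hd.trans hB
  calc d = d ^ ((1 - s) + s) := by norm_num
    _ = d ^ (1 - s) * d ^ s := Real.rpow_add' hd (by norm_num)
    _ ≤ A ^ (1 - s) * B ^ s :=
        mul_le_mul (Real.rpow_le_rpow hd hA (by linarith))
          (Real.rpow_le_rpow hd hB hs0) (Real.rpow_nonneg hd s)
          (Real.rpow_nonneg hA0 _)

theorem strong_smoothness_hoelder (a b : ℝ) (hab : a ≤ b) (C : ℝ) (hC : 0 < C)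
    (r : ℝ) (hr : r > 1/4) (s : ℝ) (hs0 : 0 < s) (hs1 : s < 2 * r - 1/2) (hs2 : s ≤ 1) :
    ∃ C' : ℝ, ∀ φ φ' : ℕ → ℝ → ℂ,
      (∀ (n : ℕ) (l : ℝ), l ∈ Set.Icc a b → HasDerivAt (φ n) (φ' n l) l) →
      (∀ (n : ℕ) (l : ℝ), l ∈ Set.Icc a b → ‖φ n l‖ ≤ C * (1 + (n : ℝ)) ^ (-(1/4 : ℝ))) →
      (∀ (n : ℕ) (l : ℝ), l ∈ Set.Icc a b → ‖φ' n l‖ ≤ C * (1 + (n : ℝ)) ^ ((1/4 : ℝ))) →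
      ∀ f : ℕ → ℂ, Summable (fun n : ℕ => ‖f n‖ ^ 2) →
      ∀ l ∈ Set.Icc a b, ∀ m ∈ Set.Icc a b,
        ‖∑' n : ℕ, (φ n m - φ n l) * (((1 + (n : ℝ)) ^ (-r) : ℝ) : ℂ) * f n‖
          ≤ C' * |m - l| ^ s * Real.sqrt (∑' n : ℕ, ‖f n‖ ^ 2) := by
  set e : ℝ := -(1/4) + s/2 - r with he
  set K : ℝ := (2*C) ^ (1 - s) * C ^ s with hK
  have hK0 : 0 ≤ K := by positivity
  -- weights
  set w : ℕ → ℝ := fun n => (1 + (n : ℝ)) ^ e with hw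
  have hw0 : ∀ n, 0 ≤ w n := fun n => Real.rpow_nonneg (by positivity) _
  have hone : ∀ n : ℕ, (0:ℝ) < 1 + n := fun n => by positivity
  have hw2 : Summable (fun n => w n ^ 2) := by
    have h1 : Summable (fun n : ℕ => ((n : ℝ)) ^ (2*e)) :=
      Real.summable_nat_rpow.mpr (by rw [he]; linarith)
    have h2 := (summable_nat_add_iff 1).mpr h1
    refine h2.congr fun n => ?_
    have : ((n + 1 : ℕ) : ℝ) = 1 + (n : ℝ) := by push_cast; ring
    rw [this, hw]
    rw [← Real.rpow_natCast ((1 + (n:ℝ)) ^ e) 2, ← Real.rpow_mul (hone n).le]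
    norm_num
    ring_nf
  set W : ℝ := Real.sqrt (∑' n, w n ^ 2) with hW
  refine ⟨K * W, ?_⟩
  intro φ φ' hderiv hφ hφ' f hf2 l hl m hm
  set h : ℝ := |m - l| with hh
  have hh0 : 0 ≤ h := abs_nonneg _
  -- pointwise bound on φ difference
  have hdiff : ∀ n : ℕ, ‖φ n m - φ n l‖ ≤ K * (1 + (n:ℝ)) ^ (-(1/4:ℝ) + s/2) * h ^ s := by
    intro n
    have hA : ‖φ n m - φ n l‖ ≤ 2 * C * (1 + (n:ℝ)) ^ (-(1/4:ℝ)) := by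
      calc ‖φ n m - φ n l‖ ≤ ‖φ n m‖ + ‖φ n l‖ := norm_sub_le _ _
        _ ≤ C * (1 + (n:ℝ)) ^ (-(1/4:ℝ)) + C * (1 + (n:ℝ)) ^ (-(1/4:ℝ)) :=
            add_le_add (hφ n m hm) (hφ n l hl)
        _ = 2 * C * (1 + (n:ℝ)) ^ (-(1/4:ℝ)) := by ring
    have hB : ‖φ n m - φ n l‖ ≤ C * (1 + (n:ℝ)) ^ ((1/4:ℝ)) * h := by
      have := (convex_Icc a b).norm_image_sub_le_of_norm_hasDerivWithin_le
        (f := φ n) (f' := fun x => φ' n x)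
        (fun x hx => (hderiv n x hx).hasDerivWithinAt)
        (fun x hx => hφ' n x hx) hl hm
      simpa [hh, Real.norm_eq_abs] using this
    have := interp s hs0.le hs2 _ _ _ (norm_nonneg _) hA hB
    refine this.trans_eq ?_
    have h1 : (2 * C * (1 + (n:ℝ)) ^ (-(1/4:ℝ))) ^ (1 - s)
        = (2*C) ^ (1-s) * ((1 + (n:ℝ)) ^ (-(1/4:ℝ) * (1-s))) := by
      rw [Real.mul_rpow (by positivity) (by positivity), Real.rpow_mul (hone n).le]
    have h2 : (C * (1 + (n:ℝ)) ^ ((1/4:ℝ)) * h) ^ s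
        = C ^ s * ((1 + (n:ℝ)) ^ ((1/4:ℝ) * s)) * h ^ s := by
      rw [Real.mul_rpow (by positivity) hh0, Real.mul_rpow hC.le (by positivity),
        Real.rpow_mul (hone n).le]
    rw [h1, h2, hK]
    rw [show -(1/4:ℝ) + s/2 = (-(1/4:ℝ) * (1-s)) + ((1/4:ℝ) * s) by ring,
      Real.rpow_add (hone n)]
    ring
  -- term bound
  set T : ℕ → ℂ := fun n => (φ n m - φ n l) * (((1 + (n : ℝ)) ^ (-r) : ℝ) : ℂ) * f n with hT
  have hterm : ∀ n, ‖T n‖ ≤ (K * h ^ s) * (w n * ‖f n‖) := by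
    intro n
    rw [hT]
    simp only [norm_mul, Complex.norm_real, Real.norm_eq_abs,
      abs_of_nonneg (Real.rpow_nonneg (hone n).le (-r))]
    calc ‖φ n m - φ n l‖ * (1 + (n:ℝ)) ^ (-r) * ‖f n‖
        ≤ (K * (1 + (n:ℝ)) ^ (-(1/4:ℝ) + s/2) * h ^ s) * (1 + (n:ℝ)) ^ (-r) * ‖f n‖ := by
          gcongr
          exact hdiff n
      _ = (K * h ^ s) * (w n * ‖f n‖) := by
          have hwn : w n = (1 + (n:ℝ)) ^ (-(1/4:ℝ) + s/2) * (1 + (n:ℝ)) ^ (-r) := by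
            rw [← Real.rpow_add (hone n)]
            simp only [hw]
            rw [he]
            rw [sub_eq_add_neg]
          rw [hwn]; ring
  have hcs := cs_tsum w (fun n => ‖f n‖) hw0 (fun n => norm_nonneg _) hw2 hf2
  have hTsum : Summable (fun n => ‖T n‖) := by
    refine Summable.of_nonneg_of_le (fun n => norm_nonneg _) hterm ?_
    exact (hcs.1.mul_left _)
  calc ‖∑' n, T n‖ ≤ ∑' n, ‖T n‖ := norm_tsum_le_tsum_norm hTsum
    _ ≤ ∑' n, (K * h ^ s) * (w n * ‖f n‖) :=
        Summable.tsum_le_tsum hterm hTsum (hcs.1.mul_left _)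
    _ = (K * h ^ s) * ∑' n, w n * ‖f n‖ := tsum_mul_left
    _ ≤ (K * h ^ s) * (W * Real.sqrt (∑' n, ‖f n‖ ^ 2)) :=
        mul_le_mul_of_nonneg_left hcs.2 (by positivity)
    _ = K * W * h ^ s * Real.sqrt (∑' n, ‖f n‖ ^ 2) := by ring
end

section
/- Let g ∈ C_0^∞(ℝ) with Fourier transform ĝ. Then lim_{t→+∞} ∑_{n=0}^∞ (2n+1)^{−1/2} |ĝ(t − sqrt(2n+1))|² = ‖ĝ‖²_{L²(ℝ)} = ‖g‖²_{L²(ℝ)}. -/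
open MeasureTheory Filter Real

/-- The Fourier transform `ĝ(x) = (2π)^{-1/2} ∫ e^{-ixξ} g(ξ) dξ`. -/
noncomputable def fourierHat (g : ℝ → ℂ) (x : ℝ) : ℂ :=
  ((Real.sqrt (2 * π))⁻¹ : ℝ) • ∫ ξ : ℝ, Complex.exp (-(Complex.I * x * ξ)) * g ξ

open FourierTransform ComplexConjugate

section RiemannGrid

noncomputable def aG (n : ℕ) : ℝ := Real.sqrt (2 * n + 1)
noncomputable def nI (s : ℝ) : ℕ := ⌊(s ^ 2 - 1) / 2⌋₊
noncomputable def cW (n : ℕ) : ℝ := (aG n)⁻¹ / (aG (n + 1) - aG n)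
noncomputable def stepF (φ : ℝ → ℝ) (t u : ℝ) : ℝ :=
  if 1 ≤ t - u then cW (nI (t - u)) * φ (t - aG (nI (t - u))) else 0

lemma one_le_aG (n : ℕ) : 1 ≤ aG n := by
  rw [aG, Real.one_le_sqrt]
  have : (0:ℝ) ≤ n := Nat.cast_nonneg n
  linarith

lemma aG_pos (n : ℕ) : 0 < aG n := lt_of_lt_of_le one_pos (one_le_aG n)

lemma sq_aG (n : ℕ) : aG n ^ 2 = 2 * n + 1 := Real.sq_sqrt (by positivity)

lemma sq_aG_succ (n : ℕ) : aG (n + 1) ^ 2 = 2 * (n:ℝ) + 3 := by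
  rw [sq_aG]; push_cast; ring

lemma aG_lt (n : ℕ) : aG n < aG (n + 1) := by
  apply Real.sqrt_lt_sqrt (by positivity)
  push_cast; linarith

lemma gap_pos (n : ℕ) : 0 < aG (n + 1) - aG n := sub_pos.mpr (aG_lt n)

lemma gap_mul (n : ℕ) : (aG (n + 1) - aG n) * (aG (n + 1) + aG n) = 2 := by
  have h1 := sq_aG n
  have h2 := sq_aG_succ n
  nlinarith [h1, h2]

lemma gap_le_one (n : ℕ) : aG (n + 1) - aG n ≤ 1 := by
  nlinarith [gap_mul n, one_le_aG n, one_le_aG (n + 1), gap_pos n]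

lemma gap_mul_aG_le (n : ℕ) : (aG (n + 1) - aG n) * aG n ≤ 1 := by
  nlinarith [gap_mul n, gap_pos n, aG_lt n, aG_pos n]

lemma cW_eq (n : ℕ) : cW n = (aG n + aG (n + 1)) / (2 * aG n) := by
  have h := gap_mul n
  have ha := aG_pos n
  have hg := gap_pos n
  rw [cW]
  field_simp
  nlinarith [h, ha, hg]

lemma one_le_cW (n : ℕ) : 1 ≤ cW n := by
  rw [cW_eq, le_div_iff₀ (by nlinarith [aG_pos n])]
  nlinarith [aG_lt n]

lemma cW_le (n : ℕ) : cW n ≤ 3 / 2 := by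
  rw [cW_eq, div_le_iff₀ (by nlinarith [aG_pos n])]
  nlinarith [gap_le_one n, one_le_aG n]

lemma cW_le' (n : ℕ) : cW n ≤ 1 + (aG n)⁻¹ := by
  rw [cW_eq, div_le_iff₀ (by nlinarith [aG_pos n])]
  have ha := (aG_pos n).ne'
  have h2 : (1 + (aG n)⁻¹) * (2 * aG n) = 2 * aG n + 2 := by field_simp
  rw [h2]
  nlinarith [gap_le_one n, one_le_aG n]

lemma aG_nI_le {s : ℝ} (hs : 1 ≤ s) : aG (nI s) ≤ s := by
  have h0 : (0:ℝ) ≤ (s ^ 2 - 1) / 2 := by nlinarith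
  have h : ((nI s : ℝ)) ≤ (s ^ 2 - 1) / 2 := by rw [nI]; exact Nat.floor_le h0
  calc aG (nI s) = Real.sqrt (2 * (nI s) + 1) := rfl
    _ ≤ Real.sqrt (s ^ 2) := Real.sqrt_le_sqrt (by linarith)
    _ = s := Real.sqrt_sq (by linarith)

lemma lt_aG_nI_succ {s : ℝ} (hs : 1 ≤ s) : s < aG (nI s + 1) := by
  have h : (s ^ 2 - 1) / 2 < (nI s : ℝ) + 1 := by rw [nI]; exact Nat.lt_floor_add_one _
  calc s = Real.sqrt (s ^ 2) := (Real.sqrt_sq (by linarith)).symm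
    _ < Real.sqrt (2 * ((nI s : ℝ) + 1) + 1) := Real.sqrt_lt_sqrt (by positivity) (by linarith)
    _ = aG (nI s + 1) := by rw [aG]; push_cast; ring_nf

lemma nI_eq {s : ℝ} {n : ℕ} (h1 : aG n ≤ s) (h2 : s < aG (n + 1)) : nI s = n := by
  have hs0 : (0:ℝ) ≤ s := le_trans (aG_pos n).le h1
  have hl : (2 * (n:ℝ) + 1) ≤ s ^ 2 := by nlinarith [sq_aG n, aG_pos n]
  have hu : s ^ 2 < 2 * (n:ℝ) + 3 := by nlinarith [sq_aG_succ n, aG_pos (n + 1)]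
  rw [nI, Nat.floor_eq_iff (by nlinarith)]
  constructor
  · rw [le_div_iff₀ (by norm_num)]; linarith
  · rw [div_lt_iff₀ (by norm_num)]; push_cast; linarith

lemma one_le_of_mem {s : ℝ} {n : ℕ} (h1 : aG n ≤ s) : 1 ≤ s := le_trans (one_le_aG n) h1

lemma stepF_nonneg {φ : ℝ → ℝ} (h0 : ∀ x, 0 ≤ φ x) (t u : ℝ) : 0 ≤ stepF φ t u := by
  rw [stepF]
  split
  · exact mul_nonneg (le_trans zero_le_one (one_le_cW _)) (h0 _)
  · exact le_refl 0

lemma measurable_stepF (φ : ℝ → ℝ) (hφ : Continuous φ) (t : ℝ) : Measurable (stepF φ t) := by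
  have hN : Measurable (fun u : ℝ => nI (t - u)) := by
    apply Measurable.nat_floor
    exact (((measurable_const.sub measurable_id).pow_const 2).sub measurable_const).div_const 2
  apply Measurable.ite
  · exact measurableSet_le measurable_const (measurable_const.sub measurable_id)
  · exact ((measurable_of_countable cW).comp hN).mul
      (hφ.measurable.comp (measurable_const.sub ((measurable_of_countable aG).comp hN)))
  · exact measurable_const

lemma sq_bound {u e : ℝ} (he0 : 0 ≤ e) (he1 : e ≤ 1) : 1 + u ^ 2 ≤ 4 * (1 + (u + e) ^ 2) := by
  nlinarith [sq_nonneg (3 * u + 4 * e), sq_nonneg e]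

lemma stepF_le {φ : ℝ → ℝ} (h0 : ∀ x, 0 ≤ φ x) {C : ℝ}
    (hC : ∀ x, φ x ≤ C / (1 + x ^ 2)) (t u : ℝ) :
    stepF φ t u ≤ 6 * C / (1 + u ^ 2) := by
  have hC0 : 0 ≤ C := by have := le_trans (h0 0) (hC 0); simpa using this
  rw [stepF]
  split
  case isFalse => positivity
  case isTrue hs =>
    set s := t - u with hsdef
    set n := nI s with hn
    have h1 : aG n ≤ s := aG_nI_le hs
    have h2 : s < aG (n + 1) := lt_aG_nI_succ hs
    have he0 : 0 ≤ s - aG n := by linarith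
    have he1 : s - aG n ≤ 1 := by linarith [gap_le_one n]
    have harg : t - aG n = u + (s - aG n) := by rw [hsdef]; ring
    have hφb : φ (t - aG n) ≤ 4 * C / (1 + u ^ 2) := by
      calc φ (t - aG n) ≤ C / (1 + (t - aG n) ^ 2) := hC _
        _ ≤ 4 * C / (1 + u ^ 2) := by
            rw [harg, div_le_div_iff₀ (by positivity) (by positivity)]
            nlinarith [sq_bound (u := u) he0 he1, hC0, sq_nonneg (u + (s - aG n))]
    calc cW n * φ (t - aG n) ≤ (3 / 2) * (4 * C / (1 + u ^ 2)) :=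
          mul_le_mul (cW_le n) hφb (h0 _) (by norm_num)
      _ = 6 * C / (1 + u ^ 2) := by ring

lemma tendsto_stepF {φ : ℝ → ℝ} (hφ : Continuous φ) (u : ℝ) :
    Tendsto (fun t => stepF φ t u) atTop (nhds (φ u)) := by
  -- auxiliary: (t - u - 1)⁻¹ → 0
  have haux : Tendsto (fun t : ℝ => (t - u - 1)⁻¹) atTop (nhds 0) := by
    apply tendsto_inv_atTop_zero.comp
    have : Tendsto (fun t : ℝ => t + (-u - 1)) atTop atTop :=
      tendsto_atTop_add_const_right atTop _ tendsto_id
    refine this.congr (fun t => by ring)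
  -- bounds valid for t ≥ u + 2
  have hbd : ∀ t : ℝ, u + 2 ≤ t →
      (1 ≤ cW (nI (t - u)) ∧ cW (nI (t - u)) ≤ 1 + (t - u - 1)⁻¹) ∧
      (u ≤ t - aG (nI (t - u)) ∧ t - aG (nI (t - u)) ≤ u + (t - u - 1)⁻¹) := by
    intro t ht
    set s := t - u with hsdef
    have hs : 1 ≤ s := by simp only [hsdef]; linarith
    set n := nI s with hn
    have h1 : aG n ≤ s := aG_nI_le hs
    have h2 : s < aG (n + 1) := lt_aG_nI_succ hs
    have hga : aG n > s - 1 := by linarith [gap_le_one n]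
    have hs1 : (0:ℝ) < s - 1 := by simp only [hsdef]; linarith
    have hinv : (aG n)⁻¹ ≤ (s - 1)⁻¹ := by
      apply inv_anti₀ hs1 hga.le
    have hgap : aG (n + 1) - aG n ≤ (aG n)⁻¹ := by
      rw [inv_eq_one_div, le_div_iff₀ (aG_pos n)]
      exact gap_mul_aG_le n
    refine ⟨⟨one_le_cW n, le_trans (cW_le' n) (by linarith)⟩, ?_, ?_⟩
    · linarith
    · have : s - aG n ≤ (s - 1)⁻¹ := by linarith
      linarith
  have hT1 : Tendsto (fun t => cW (nI (t - u))) atTop (nhds 1) := by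
    apply tendsto_of_tendsto_of_tendsto_of_le_of_le' tendsto_const_nhds
      (by simpa using tendsto_const_nhds.add haux)
    · filter_upwards [eventually_ge_atTop (u + 2)] with t ht
      exact ((hbd t ht).1).1
    · filter_upwards [eventually_ge_atTop (u + 2)] with t ht
      exact ((hbd t ht).1).2
  have hT2 : Tendsto (fun t => t - aG (nI (t - u))) atTop (nhds u) := by
    apply tendsto_of_tendsto_of_tendsto_of_le_of_le' tendsto_const_nhds
      (by simpa using tendsto_const_nhds.add haux)
    · filter_upwards [eventually_ge_atTop (u + 2)] with t ht
      exact ((hbd t ht).2).1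
    · filter_upwards [eventually_ge_atTop (u + 2)] with t ht
      exact ((hbd t ht).2).2
  have hT3 : Tendsto (fun t => φ (t - aG (nI (t - u)))) atTop (nhds (φ u)) :=
    (hφ.continuousAt.tendsto).comp hT2
  have := hT1.mul hT3
  rw [one_mul] at this
  apply this.congr'
  filter_upwards [eventually_ge_atTop (u + 1)] with t ht
  rw [stepF, if_pos (by linarith)]

lemma integral_stepF {φ : ℝ → ℝ} (hφ : Continuous φ) (hint : ∀ t, Integrable (stepF φ t)) (t : ℝ) :
    ∫ u, stepF φ t u = ∑' n : ℕ, (2 * (n : ℝ) + 1) ^ (-(1/2 : ℝ)) *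
      φ (t - Real.sqrt (2 * (n : ℝ) + 1)) := by
  set S : ℕ → Set ℝ := fun n => Set.Ioc (t - aG (n + 1)) (t - aG n) with hS
  have hmeas : ∀ n, MeasurableSet (S n) := fun n => measurableSet_Ioc
  have hdisj : Pairwise (Function.onFun Disjoint S) := by
    have aG_mono : ∀ {m n : ℕ}, m ≤ n → aG m ≤ aG n := by
      intro m n h
      apply Real.sqrt_le_sqrt
      have : (m:ℝ) ≤ n := by exact_mod_cast h
      linarith
    have key : ∀ m n, m < n → Disjoint (S m) (S n) := by
      intro m n hmn
      rw [Set.disjoint_left]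
      intro u hu hu'
      have h1 : t - aG (m + 1) < u := hu.1
      have h2 : u ≤ t - aG n := hu'.2
      have h3 : aG (m + 1) ≤ aG n := aG_mono (Nat.succ_le_of_lt hmn)
      linarith
    intro m n hmn
    rcases hmn.lt_or_gt with h | h
    · exact key m n h
    · exact (key n m h).symm
  have hunion : (⋃ n, S n) = Set.Iic (t - 1) := by
    ext u
    simp only [Set.mem_iUnion, Set.mem_Iic, hS, Set.mem_Ioc]
    constructor
    · rintro ⟨n, _, h2⟩
      linarith [one_le_aG n]
    · intro hu
      have hs : 1 ≤ t - u := by linarith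
      refine ⟨nI (t - u), ?_, ?_⟩
      · linarith [lt_aG_nI_succ hs]
      · linarith [aG_nI_le hs]
  have hzero : ∫ u in Set.Ioi (t - 1), stepF φ t u = 0 := by
    apply MeasureTheory.setIntegral_eq_zero_of_forall_eq_zero
    intro u hu
    rw [stepF, if_neg]
    simp only [Set.mem_Ioi] at hu
    intro h; linarith
  have hsplit : ∫ u, stepF φ t u = ∫ u in Set.Iic (t - 1), stepF φ t u := by
    rw [← MeasureTheory.integral_add_compl (measurableSet_Iic (a := t - 1)) (hint t),
      Set.compl_Iic, hzero, add_zero]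
  rw [hsplit, ← hunion, MeasureTheory.integral_iUnion hmeas hdisj ((hint t).integrableOn)]
  congr 1
  ext n
  have hval : ∀ u ∈ S n, stepF φ t u = cW n * φ (t - aG n) := by
    intro u hu
    simp only [hS, Set.mem_Ioc] at hu
    have h1 : aG n ≤ t - u := by linarith [hu.2]
    have h2 : t - u < aG (n + 1) := by linarith [hu.1]
    rw [stepF, if_pos (one_le_of_mem h1), nI_eq h1 h2]
  rw [MeasureTheory.setIntegral_congr_fun (hmeas n) hval, MeasureTheory.setIntegral_const]
  have hvol : (volume (S n)).toReal = aG (n + 1) - aG n := by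
    simp only [hS, Real.volume_Ioc]
    rw [ENNReal.toReal_ofReal (by linarith [gap_pos n])]
    ring
  rw [MeasureTheory.measureReal_def, hvol, smul_eq_mul]
  have hw : (2 * (n : ℝ) + 1) ^ (-(1/2 : ℝ)) = (aG n)⁻¹ := by
    rw [Real.rpow_neg (by positivity), aG, Real.sqrt_eq_rpow]
  have harg : t - Real.sqrt (2 * (n:ℝ) + 1) = t - aG n := rfl
  have hg := (gap_pos n).ne'
  rw [hw, harg, ← mul_assoc, mul_comm (aG (n+1) - aG n) (cW n), cW, div_mul_cancel₀ _ hg]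

lemma riemann_key {φ : ℝ → ℝ} (hφ : Continuous φ) (h0 : ∀ x, 0 ≤ φ x) {C : ℝ}
    (hC : ∀ x, φ x ≤ C / (1 + x ^ 2)) :
    Tendsto (fun t : ℝ => ∑' n : ℕ, (2 * (n : ℝ) + 1) ^ (-(1/2 : ℝ)) *
        φ (t - Real.sqrt (2 * (n : ℝ) + 1))) atTop (nhds (∫ x : ℝ, φ x)) := by
  have hC0 : 0 ≤ C := by have := le_trans (h0 0) (hC 0); simpa using this
  have hbound : Integrable (fun u : ℝ => 6 * C / (1 + u ^ 2)) := by
    have := integrable_inv_one_add_sq.const_mul (6 * C)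
    apply this.congr
    filter_upwards with u
    rw [div_eq_mul_inv]
  have hmeas : ∀ t : ℝ, AEStronglyMeasurable (stepF φ t) volume := fun t =>
    (measurable_stepF φ hφ t).aestronglyMeasurable
  have hb : ∀ t : ℝ, ∀ᵐ u : ℝ, ‖stepF φ t u‖ ≤ 6 * C / (1 + u ^ 2) := by
    intro t
    filter_upwards with u
    rw [Real.norm_eq_abs, abs_of_nonneg (stepF_nonneg h0 t u)]
    exact stepF_le h0 hC t u
  have hint : ∀ t : ℝ, Integrable (stepF φ t) := fun t =>
    Integrable.mono hbound (hmeas t) (by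
      filter_upwards [hb t] with u hu
      refine hu.trans (le_abs_self _))
  have main : Tendsto (fun t : ℝ => ∫ u, stepF φ t u) atTop (nhds (∫ x, φ x)) := by
    apply tendsto_integral_filter_of_dominated_convergence (fun u : ℝ => 6 * C / (1 + u ^ 2))
      (Eventually.of_forall hmeas) (Eventually.of_forall hb) hbound
    filter_upwards with u
    exact tendsto_stepF hφ u
  apply main.congr
  intro t
  exact integral_stepF hφ hint t

end RiemannGrid

section FourierPart
lemma fourierHat_eq (g : ℝ → ℂ) (x : ℝ) :
    fourierHat g x = ((Real.sqrt (2 * π))⁻¹ : ℝ) • 𝓕 g (x / (2 * π)) := by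
  rw [fourierHat, Real.fourier_real_eq_integral_exp_smul]
  congr 1
  have h : ∀ ξ : ℝ, Complex.exp (-(Complex.I * x * ξ)) * g ξ =
      Complex.exp (↑(-2 * π * ξ * (x / (2 * π))) * Complex.I) • g ξ := by
    intro ξ
    rw [smul_eq_mul]
    congr 2
    have hπ : (π:ℝ) ≠ 0 := Real.pi_ne_zero
    have harg : (-2 * π * ξ * (x / (2 * π)) : ℝ) = -(ξ * x) := by field_simp
    rw [harg]
    push_cast
    ring
  simp_rw [h]

noncomputable def toSchwartz (g : ℝ → ℂ) (hg : ContDiff ℝ (⊤ : ℕ∞) g) (hgcs : HasCompactSupport g) :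
    SchwartzMap ℝ ℂ where
  toFun := g
  smooth' := hg.of_le (by simp)
  decay' := by
    intro k n
    obtain ⟨M, hM⟩ := (hgcs.iteratedFDeriv (𝕜 := ℝ) n).exists_bound_of_continuous
      (hg.continuous_iteratedFDeriv (by exact_mod_cast le_top))
    obtain ⟨R, hR⟩ := (hgcs.iteratedFDeriv (𝕜 := ℝ) n).isCompact.isBounded.subset_closedBall 0
    refine ⟨(max R 0) ^ k * max M 0, fun x => ?_⟩
    by_cases hx : x ∈ tsupport (iteratedFDeriv ℝ n g)
    · have h1 : ‖x‖ ≤ max R 0 := by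
        have := hR hx
        rw [Metric.mem_closedBall, dist_zero_right] at this
        exact this.trans (le_max_left _ _)
      have h2 : ‖iteratedFDeriv ℝ n g x‖ ≤ max M 0 := (hM x).trans (le_max_left _ _)
      exact mul_le_mul (pow_le_pow_left₀ (norm_nonneg x) h1 k) h2 (norm_nonneg _) (by positivity)
    · rw [image_eq_zero_of_notMem_tsupport hx]
      simp only [norm_zero, mul_zero]
      positivity

lemma fourier_conj (F : ℝ → ℂ) (x : ℝ) :
    𝓕 (fun ξ => conj (F ξ)) x = conj (𝓕⁻ F x) := by
  rw [Real.fourier_eq', Real.fourierInv_eq', ← integral_conj]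
  congr 1
  ext ξ
  rw [smul_eq_mul, smul_eq_mul, map_mul, ← Complex.exp_conj]
  congr 2
  simp only [map_mul, Complex.conj_ofReal, Complex.conj_I]
  push_cast
  ring

lemma plancherel_aux (g : ℝ → ℂ) (hg : ContDiff ℝ (⊤ : ℕ∞) g) (hgcs : HasCompactSupport g) :
    ∫ ξ : ℝ, ‖𝓕 g ξ‖ ^ 2 = ∫ x : ℝ, ‖g x‖ ^ 2 := by
  set gS := toSchwartz g hg hgcs with hgS
  have hcoe : ⇑gS = g := rfl
  have hg_int : Integrable g := hg.continuous.integrable_of_hasCompactSupport hgcs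
  have hFg_int : Integrable (𝓕 g) := by
    have := (SchwartzMap.fourierTransformCLM ℝ gS).integrable (μ := volume)
    rwa [SchwartzMap.fourierTransformCLM_apply, SchwartzMap.fourier_coe, hcoe] at this
  have hconj_int : Integrable (fun ξ => conj (𝓕 g ξ)) := by
    refine ⟨(Complex.continuous_conj.comp_aestronglyMeasurable hFg_int.1), ?_⟩
    simpa [MeasureTheory.HasFiniteIntegral] using hFg_int.2
  have hflip : (innerₗ ℝ).flip = innerₗ ℝ := by
    apply LinearMap.ext; intro a; apply LinearMap.ext; intro b
    simp [real_inner_comm]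
  have mult := VectorFourier.integral_fourierIntegral_smul_eq_flip (L := innerₗ ℝ)
    Real.continuous_fourierChar continuous_inner hg_int hconj_int
  rw [hflip] at mult
  have hL : ∫ ξ : ℝ, (𝓕 g ξ) * conj (𝓕 g ξ) =
      ∫ x : ℝ, g x * conj (g x) := by
    calc ∫ ξ : ℝ, (𝓕 g ξ) * conj (𝓕 g ξ)
        = ∫ ξ : ℝ, (VectorFourier.fourierIntegral 𝐞 volume (innerₗ ℝ) g ξ) •
            (fun ξ => conj (𝓕 g ξ)) ξ := by rfl
      _ = ∫ x : ℝ, g x • (VectorFourier.fourierIntegral 𝐞 volume (innerₗ ℝ)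
            (fun ξ => conj (𝓕 g ξ)) x) := mult
      _ = ∫ x : ℝ, g x * conj (g x) := by
          congr 1
          ext x
          rw [smul_eq_mul]
          congr 1
          have h1 : VectorFourier.fourierIntegral 𝐞 volume (innerₗ ℝ)
              (fun ξ => conj (𝓕 g ξ)) x = 𝓕 (fun ξ => conj (𝓕 g ξ)) x := rfl
          rw [h1, fourier_conj]
          congr 1
          exact hg_int.fourierInv_fourier_eq hFg_int hg.continuous.continuousAt
  have hsq : ∀ z : ℂ, z * conj z = ((‖z‖ ^ 2 : ℝ) : ℂ) := by
    intro z
    rw [Complex.mul_conj]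
    norm_cast
    rw [Complex.sq_norm]
  simp_rw [hsq] at hL
  have e1 : ∫ ξ : ℝ, Complex.ofReal (‖𝓕 g ξ‖ ^ 2) = Complex.ofReal (∫ ξ : ℝ, ‖𝓕 g ξ‖ ^ 2) :=
    integral_ofReal
  have e2 : ∫ x : ℝ, Complex.ofReal (‖g x‖ ^ 2) = Complex.ofReal (∫ x : ℝ, ‖g x‖ ^ 2) :=
    integral_ofReal
  rw [e1, e2] at hL
  exact_mod_cast hL

lemma fourierHat_sq (g : ℝ → ℂ) (x : ℝ) :
    ‖fourierHat g x‖ ^ 2 = (2 * π)⁻¹ * ‖𝓕 g (x / (2 * π))‖ ^ 2 := by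
  rw [fourierHat_eq, norm_smul, mul_pow]
  congr 1
  rw [Real.norm_eq_abs, sq_abs, ← Real.sqrt_inv, Real.sq_sqrt (by positivity)]

lemma integral_fourierHat_sq (g : ℝ → ℂ) (hg : ContDiff ℝ (⊤ : ℕ∞) g) (hgcs : HasCompactSupport g) :
    ∫ x : ℝ, ‖fourierHat g x‖ ^ 2 = ∫ x : ℝ, ‖g x‖ ^ 2 := by
  have h1 : ∫ x : ℝ, ‖fourierHat g x‖ ^ 2 =
      (2 * π)⁻¹ * ∫ x : ℝ, ‖𝓕 g (x / (2 * π))‖ ^ 2 := by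
    simp_rw [fourierHat_sq]
    rw [integral_const_mul]
  rw [h1, MeasureTheory.Measure.integral_comp_div (fun y => ‖𝓕 g y‖ ^ 2) (2 * π),
    abs_of_pos (by positivity), smul_eq_mul, ← mul_assoc,
    inv_mul_cancel₀ (by positivity), one_mul]
  exact plancherel_aux g hg hgcs

lemma fourierIntegral_g_continuous (g : ℝ → ℂ) (hg : ContDiff ℝ (⊤ : ℕ∞) g)
    (hgcs : HasCompactSupport g) : Continuous (𝓕 g) := by
  have := (SchwartzMap.fourierTransformCLM ℝ (toSchwartz g hg hgcs)).continuous
  rwa [SchwartzMap.fourierTransformCLM_apply] at this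

lemma fourierHat_continuous (g : ℝ → ℂ) (hg : ContDiff ℝ (⊤ : ℕ∞) g)
    (hgcs : HasCompactSupport g) : Continuous (fourierHat g) := by
  have h : fourierHat g = fun x => ((Real.sqrt (2 * π))⁻¹ : ℝ) • 𝓕 g (x / (2 * π)) :=
    funext (fourierHat_eq g)
  rw [h]
  exact (continuous_const (y := ((Real.sqrt (2 * π))⁻¹ : ℝ))).smul ((fourierIntegral_g_continuous g hg hgcs).comp
    (continuous_id.div_const _))

lemma fourierHat_decay (g : ℝ → ℂ) (hg : ContDiff ℝ (⊤ : ℕ∞) g) (hgcs : HasCompactSupport g) :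
    ∃ C : ℝ, ∀ x : ℝ, ‖fourierHat g x‖ ^ 2 ≤ C / (1 + x ^ 2) := by
  set Ghat := SchwartzMap.fourierTransformCLM ℝ (toSchwartz g hg hgcs) with hGhat
  have hGeq : ⇑Ghat = 𝓕 g := by rw [hGhat, SchwartzMap.fourierTransformCLM_apply]; rfl
  obtain ⟨C0, hC0pos, hC0⟩ := Ghat.decay 0 0
  obtain ⟨C2, hC2pos, hC2⟩ := Ghat.decay 2 0
  rw [hGeq] at hC0 hC2
  have hb0 : ∀ y : ℝ, ‖𝓕 g y‖ ≤ C0 := by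
    intro y
    have := hC0 y
    simpa [norm_iteratedFDeriv_zero] using this
  have hb2 : ∀ y : ℝ, y ^ 2 * ‖𝓕 g y‖ ≤ C2 := by
    intro y
    have := hC2 y
    rwa [norm_iteratedFDeriv_zero, Real.norm_eq_abs, sq_abs] at this
  set K := C0 ^ 2 + C2 * C0 with hK
  have hK0 : 0 ≤ K := by positivity
  have key : ∀ y : ℝ, ‖𝓕 g y‖ ^ 2 * (1 + y ^ 2) ≤ K := by
    intro y
    nlinarith [hb0 y, hb2 y, norm_nonneg (𝓕 g y), sq_nonneg y, hC0pos.le, hC2pos.le,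
      mul_le_mul_of_nonneg_right (hb0 y) (norm_nonneg (𝓕 g y)),
      mul_le_mul_of_nonneg_right (hb2 y) (norm_nonneg (𝓕 g y))]
  refine ⟨2 * π * K, fun x => ?_⟩
  rw [fourierHat_sq, le_div_iff₀ (by positivity)]
  set y := x / (2 * π) with hy
  have hxy : x = 2 * π * y := by rw [hy]; field_simp
  have goal' : ‖𝓕 g y‖ ^ 2 * (1 + (2 * π * y) ^ 2) ≤ 4 * π ^ 2 * K := by
    have hπ2 : 1 ≤ 4 * π ^ 2 := by nlinarith [Real.pi_gt_three]
    nlinarith [hK0, mul_le_mul_of_nonneg_left (key y) (by positivity : (0:ℝ) ≤ 4 * π ^ 2),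
      mul_nonneg (sub_nonneg.mpr hπ2) (sq_nonneg (‖𝓕 g y‖))]
  calc (2 * π)⁻¹ * ‖𝓕 g y‖ ^ 2 * (1 + x ^ 2)
      = (2 * π)⁻¹ * (‖𝓕 g y‖ ^ 2 * (1 + (2 * π * y) ^ 2)) := by rw [hxy]; ring
    _ ≤ (2 * π)⁻¹ * (4 * π ^ 2 * K) := by
        exact mul_le_mul_of_nonneg_left goal' (by positivity)
    _ = 2 * π * K := by field_simp; ring

end FourierPart

theorem hermite_unitarity_riemann_sum
    (g : ℝ → ℂ) (hg : ContDiff ℝ (⊤ : ℕ∞) g) (hgcs : HasCompactSupport g) :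
    Tendsto (fun t : ℝ =>
        ∑' n : ℕ, (2 * (n : ℝ) + 1) ^ (-(1/2 : ℝ)) *
          ‖fourierHat g (t - Real.sqrt (2 * (n : ℝ) + 1))‖ ^ 2)
      atTop (nhds (∫ x : ℝ, ‖fourierHat g x‖ ^ 2)) ∧
    (∫ x : ℝ, ‖fourierHat g x‖ ^ 2) = ∫ x : ℝ, ‖g x‖ ^ 2 := by
  refine ⟨?_, integral_fourierHat_sq g hg hgcs⟩
  obtain ⟨C, hC⟩ := fourierHat_decay g hg hgcs
  exact riemann_key ((fourierHat_continuous g hg hgcs).norm.pow 2) (fun x => by positivity) hC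
end
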